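/- Let p be a prime, let m be an integer coprime to p, and let s ≥ 1 be an integer. The group G_s(1,m) = ⟨a, b; b⁻¹ab = aᵐ, a^{p^s} = 1⟩ is residually a finite p-group if and only if m ≡ 1 (mod p). -/

import Mathlib

/-- A group `X` is *residually a finite p-group* if every non-identity element is excluded
by some normal subgroup of `p`-power index. -/
def ResiduallyPGroup (p : ℕ) (X : Type*) [Group X] : Prop :=
  ∀ x : X, x ≠ 1 → ∃ N : Subgroup X, N.Normal ∧ x ∉ N ∧ ∃ k : ℕ, N.index = p ^ k

/-- The relators `b⁻¹ab·a⁻ᵐ` and `a^{pˢ}` of the group `G_s(1,m)`,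
with `a = FreeGroup.of 0` and `b = FreeGroup.of 1`. -/
def bsTorsionRels (m : ℤ) (q : ℕ) : Set (FreeGroup (Fin 2)) :=
  {(FreeGroup.of 1)⁻¹ * FreeGroup.of 0 * FreeGroup.of 1 * ((FreeGroup.of 0) ^ m)⁻¹,
   (FreeGroup.of 0) ^ q}

/-- The group `G_s(1,m) = ⟨a, b; b⁻¹ab = aᵐ, a^{q} = 1⟩` (with `q = pˢ`). -/
def BSTorsion (m : ℤ) (q : ℕ) : Type := PresentedGroup (bsTorsionRels m q)

instance (m : ℤ) (q : ℕ) : Group (BSTorsion m q) := by delta BSTorsion; infer_instance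

/-!
Since `m` is a unit modulo `q = pˢ`, the group `G_s(1,m)` is the semidirect product
`ZMod q ⋊ ℤ` in which `b⁻¹` acts as multiplication by `m`.

If `m ≡ 1 (mod p)` then `m ^ p^(s-1) ≡ 1 (mod pˢ)`, so the action factors through
`ℤ/pᴺ` for every `N ≥ s - 1`; the finite `p`-groups `ZMod q ⋊ ℤ/pᴺ` separate the elements
once `pᴺ` exceeds the `ℤ`-coordinate.

Conversely, let `P` be a finite `p`-group quotient in which the image of `a` is nontrivial.
There `b ^ |P| = 1`, so `a = a ^ (m ^ |P|)` and `p` divides the order of `a`, hence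
`m ^ |P| - 1`, which is `m - 1` modulo `p` by Fermat.
-/

open Multiplicative SemidirectProduct

section ResiduallyPGroup

variable {p : ℕ} {X : Type*} [Group X]

theorem exists_normal_notMem_index_eq_pow_of_monoidHom (hp : p.Prime) {Q : Type*} [Group Q]
    {k : ℕ} (hQ : Nat.card Q = p ^ k) (f : X →* Q) {x : X} (hx : f x ≠ 1) :
    ∃ N : Subgroup X, N.Normal ∧ x ∉ N ∧ ∃ j : ℕ, N.index = p ^ j := by
  refine ⟨f.ker, f.normal_ker, hx, ?_⟩
  have hdvd : f.ker.index ∣ p ^ k := by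
    rw [Subgroup.index_ker, ← hQ]
    exact Subgroup.card_subgroup_dvd_card _
  obtain ⟨j, -, hj⟩ := (Nat.dvd_prime_pow hp).mp hdvd
  exact ⟨j, hj⟩

theorem ResiduallyPGroup.of_injective (hp : p.Prime) {Y : Type*} [Group Y]
    (hY : ResiduallyPGroup p Y) (f : X →* Y) (hf : Function.Injective f) :
    ResiduallyPGroup p X := by
  intro x hx
  obtain ⟨N, hN, hxN, k, hk⟩ := hY (f x) ((map_ne_one_iff f hf).mpr hx)
  exact exists_normal_notMem_index_eq_pow_of_monoidHom hp hk ((QuotientGroup.mk' N).comp f)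
    (by rwa [MonoidHom.comp_apply, ne_eq, QuotientGroup.mk'_apply, QuotientGroup.eq_one_iff])

theorem inv_pow_mul_mul_pow_eq_zpow_pow {a b : X} {m : ℤ} (h : b⁻¹ * a * b = a ^ m) (n : ℕ) :
    (b ^ n)⁻¹ * a * b ^ n = a ^ m ^ n := by
  induction n with
  | zero => simp
  | succ n ih =>
    calc (b ^ (n + 1))⁻¹ * a * b ^ (n + 1) = b⁻¹ * ((b ^ n)⁻¹ * a * b ^ n) * b := by group
      _ = (b⁻¹ * a * b) ^ m ^ n := by rw [ih]; simpa using (conj_zpow (a := b⁻¹) ..).symm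
      _ = a ^ m ^ (n + 1) := by rw [h, ← zpow_mul, pow_succ']

theorem int_modEq_one_of_inv_mul_mul_eq_zpow_of_card_eq (hp : p.Prime) {k : ℕ}
    (hX : Nat.card X = p ^ k) {a b : X} {m : ℤ} (ha : a ≠ 1) (h : b⁻¹ * a * b = a ^ m) :
    m ≡ 1 [ZMOD p] := by
  have := Fact.mk hp
  have : Finite X := Nat.finite_of_card_ne_zero (by simp [hX, hp.ne_zero])
  have hfix : a ^ (m ^ p ^ k - 1) = 1 := by
    have hb : b ^ p ^ k = 1 := hX ▸ pow_card_eq_one'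
    have := inv_pow_mul_mul_pow_eq_zpow_pow h (p ^ k)
    rw [hb, inv_one, one_mul, mul_one] at this
    rw [zpow_sub_one, ← this, mul_inv_cancel]
  have hp_dvd : p ∣ orderOf a := by
    obtain ⟨j, -, hj⟩ := (Nat.dvd_prime_pow hp).mp (hX ▸ orderOf_dvd_natCard a)
    rcases j with _ | j
    · exact absurd (orderOf_eq_one_iff.mp (by simpa using hj)) ha
    · exact hj ▸ dvd_pow_self p j.succ_ne_zero
  have hzero : ((m ^ p ^ k - 1 : ℤ) : ZMod p) = 0 :=
    (ZMod.intCast_zmod_eq_zero_iff_dvd _ p).mpr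
      ((Int.natCast_dvd_natCast.mpr hp_dvd).trans (orderOf_dvd_iff_zpow_eq_one.mpr hfix))
  rw [Int.cast_sub, Int.cast_pow, ZMod.pow_card_pow, sub_eq_zero] at hzero
  exact (ZMod.intCast_eq_intCast_iff _ _ p).mp (by simpa using hzero)

theorem ResiduallyPGroup.int_modEq_one_of_inv_mul_mul_eq_zpow (hp : p.Prime)
    (hX : ResiduallyPGroup p X) {a b : X} {m : ℤ} (ha : a ≠ 1) (h : b⁻¹ * a * b = a ^ m) :
    m ≡ 1 [ZMOD p] := by
  obtain ⟨N, hN, haN, k, hk⟩ := hX a ha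
  refine int_modEq_one_of_inv_mul_mul_eq_zpow_of_card_eq hp hk
    (a := (a : X ⧸ N)) (b := (b : X ⧸ N)) ?_ ?_
  · rwa [ne_eq, QuotientGroup.eq_one_iff]
  · simpa using congrArg (QuotientGroup.mk (s := N)) h

end ResiduallyPGroup

section ReductionModulo

variable {H : Type*} [Group H]

def MonoidHom.liftZMod (ψ : Multiplicative ℤ →* H) (c : ℕ) (hc : ψ (ofAdd (c : ℤ)) = 1) :
    Multiplicative (ZMod c) →* H :=
  AddMonoidHom.toMultiplicativeLeft (ZMod.lift c ⟨ψ.toAdditiveRight, by simp [hc]⟩)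

@[simp]
theorem MonoidHom.liftZMod_ofAdd_intCast (ψ : Multiplicative ℤ →* H) (c : ℕ)
    (hc : ψ (ofAdd (c : ℤ)) = 1) (z : ℤ) :
    ψ.liftZMod c hc (ofAdd (z : ZMod c)) = ψ (ofAdd z) := by
  simp [MonoidHom.liftZMod]

variable {p : ℕ} {K : Type*} [Group K]

theorem residuallyPGroup_semidirectProduct_int (hp : p.Prime) {a n : ℕ} (hK : Nat.card K = p ^ a)
    (ψ : Multiplicative ℤ →* MulAut K) (hψ : ψ (ofAdd ((p ^ n : ℕ) : ℤ)) = 1) :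
    ResiduallyPGroup p (K ⋊[ψ] Multiplicative ℤ) := by
  intro x hx
  -- modulo `p ^ (n + |z|)` the `ℤ`-coordinate `z` of `x` does not vanish unless `z = 0`
  set z := toAdd x.right
  set c := p ^ (n + z.natAbs)
  have hc : ψ (ofAdd (c : ℤ)) = 1 := by
    rw [show (c : ℤ) = (p ^ z.natAbs) • ((p ^ n : ℕ) : ℤ) by push_cast [c]; ring,
      ofAdd_nsmul, map_pow, hψ, one_pow]
  let ρ : K ⋊[ψ] Multiplicative ℤ →* K ⋊[ψ.liftZMod c hc] Multiplicative (ZMod c) :=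
    map (MonoidHom.id K) (Int.castAddHom (ZMod c)).toMultiplicative fun g => by
      ext y
      simp
  refine exists_normal_notMem_index_eq_pow_of_monoidHom hp (k := a + (n + z.natAbs)) ?_ ρ ?_
  · rw [SemidirectProduct.card, hK, Nat.card_congr toAdd, Nat.card_zmod, pow_add]
  · intro h
    have hz : (c : ℤ) ∣ z :=
      (ZMod.intCast_zmod_eq_zero_iff_dvd z c).mp (congrArg (toAdd ∘ right) h)
    have hz0 : z = 0 := Int.eq_zero_of_dvd_of_natAbs_lt_natAbs hz (by
      simpa [c] using (Nat.lt_pow_self hp.one_lt).trans_le (Nat.pow_le_pow_right hp.pos (by omega)))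
    have hleft : (ρ x).left = 1 := congrArg left h
    exact hx (SemidirectProduct.ext hleft hz0)

end ReductionModulo

theorem MonoidHom.apply_zpow_mulAut_apply {K G : Type*} [Group K] [Group G] (f : K →* G)
    {α : MulAut K} {β : MulAut G} (h : ∀ x, f (α x) = β (f x)) (z : ℤ) (x : K) :
    f ((α ^ z) x) = (β ^ z) (f x) := by
  have h_inv : ∀ x, f (α⁻¹ x) = β⁻¹ (f x) := fun x => by
    rw [← MulAut.inv_apply_self G β (f (α⁻¹ x)), ← h, MulAut.apply_inv_self]
  induction z using Int.induction_on generalizing x with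
  | zero => rfl
  | succ n ih => rw [zpow_add_one, zpow_add_one, MulAut.mul_apply, MulAut.mul_apply, ih, h]
  | pred n ih => rw [zpow_sub_one, zpow_sub_one, MulAut.mul_apply, MulAut.mul_apply, ih, h_inv]

theorem ZMod.intCast_pow_pow_eq_one_of_modEq_one {p : ℕ} {m : ℤ} (h : m ≡ 1 [ZMOD p])
    (n : ℕ) : (m : ZMod (p ^ (n + 1))) ^ p ^ n = 1 := by
  have hdvd := dvd_sub_pow_of_dvd_sub h.symm.dvd n
  rw [one_pow] at hdvd
  have := (ZMod.intCast_zmod_eq_zero_iff_dvd _ (p ^ (n + 1))).mpr (by exact_mod_cast hdvd)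
  push_cast at this
  exact sub_eq_zero.mp this

def ZMod.unitsMulAut (q : ℕ) : (ZMod q)ˣ →* MulAut (Multiplicative (ZMod q)) :=
  (MulAutMultiplicative (ZMod q)).symm.toMonoidHom.comp
    (DistribMulAction.toAddAut (ZMod q)ˣ (ZMod q))

@[simp]
theorem ZMod.unitsMulAut_apply {q : ℕ} (u : (ZMod q)ˣ) (x : Multiplicative (ZMod q)) :
    ZMod.unitsMulAut q u x = ofAdd ((u : ZMod q) * toAdd x) :=
  rfl

namespace BSTorsion

variable {m : ℤ} {q : ℕ}

def a : BSTorsion m q := PresentedGroup.of 0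

def b : BSTorsion m q := PresentedGroup.of 1

theorem a_pow_eq_one : (a : BSTorsion m q) ^ q = 1 := by
  have := PresentedGroup.one_of_mem (rels := bsTorsionRels m q) (x := FreeGroup.of 0 ^ q)
    (by simp [bsTorsionRels])
  rw [map_pow] at this
  exact this

theorem b_inv_mul_a_mul_b : (b : BSTorsion m q)⁻¹ * a * b = a ^ m := by
  have := PresentedGroup.one_of_mem (rels := bsTorsionRels m q)
    (x := (FreeGroup.of 1)⁻¹ * FreeGroup.of 0 * FreeGroup.of 1 * ((FreeGroup.of 0) ^ m)⁻¹)
    (by simp [bsTorsionRels])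
  rw [map_mul, map_mul, map_mul, map_inv, map_inv, map_zpow, mul_inv_eq_one] at this
  exact this

section Lift

variable {G : Type*} [Group G] (x y : G) (hx : x ^ q = 1) (hxy : y⁻¹ * x * y = x ^ m)

def lift : BSTorsion m q →* G :=
  PresentedGroup.toGroup (f := ![x, y]) (by
    rintro r (rfl | rfl) <;> simp [hxy, hx])

theorem lift_a : lift x y hx hxy a = x := PresentedGroup.toGroup.of _

theorem lift_b : lift x y hx hxy b = y := PresentedGroup.toGroup.of _

end Lift

theorem hom_ext {G : Type*} [Group G] {f g : BSTorsion m q →* G} (ha : f a = g a)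
    (hb : f b = g b) : f = g :=
  PresentedGroup.ext fun i => by fin_cases i; exacts [ha, hb]

variable (u : (ZMod q)ˣ) (hu : (u : ZMod q) = m)

/-- `b` goes to `-1` so that conjugation by `b⁻¹` becomes multiplication by `u = m`. -/
def toSemidirect :
    BSTorsion m q →* Multiplicative (ZMod q) ⋊[(ZMod.unitsMulAut q).comp (zpowersHom _ u)]
      Multiplicative ℤ :=
  lift (inl (ofAdd 1)) (inr (ofAdd (-1)))
    (by rw [← map_pow, ← ofAdd_nsmul, nsmul_one, ZMod.natCast_self, ofAdd_zero, map_one])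
    (by rw [← map_zpow, ← ofAdd_zsmul, zsmul_one, ← hu]; ext <;> simp)

theorem toSemidirect_a : toSemidirect u hu a = inl (ofAdd 1) := lift_a ..

theorem toSemidirect_b : toSemidirect u hu b = inr (ofAdd (-1)) := lift_b ..

def powA : Multiplicative (ZMod q) →* BSTorsion m q :=
  (zpowersHom _ a).liftZMod q (by simpa using a_pow_eq_one)

theorem powA_ofAdd_intCast (z : ℤ) : powA (ofAdd (z : ZMod q)) = (a : BSTorsion m q) ^ z := by
  simp [powA]

include hu in
theorem powA_unitsMulAut (x : Multiplicative (ZMod q)) :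
    (powA : Multiplicative (ZMod q) →* BSTorsion m q) (ZMod.unitsMulAut q u x) =
      MulAut.conj b⁻¹ (powA x) := by
  obtain ⟨z, rfl⟩ : ∃ z : ℤ, ofAdd (z : ZMod q) = x :=
    ⟨_, congrArg ofAdd (ZMod.intCast_zmod_cast (toAdd x))⟩
  rw [ZMod.unitsMulAut_apply, toAdd_ofAdd, hu, ← Int.cast_mul, powA_ofAdd_intCast,
    powA_ofAdd_intCast, MulAut.conj_apply, inv_inv, zpow_mul, ← b_inv_mul_a_mul_b]
  simpa using (conj_zpow (a := b⁻¹) (b := (a : BSTorsion m q)) (i := z))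

include hu in
def ofSemidirect :
    Multiplicative (ZMod q) ⋊[(ZMod.unitsMulAut q).comp (zpowersHom _ u)] Multiplicative ℤ →*
      BSTorsion m q :=
  SemidirectProduct.lift powA (zpowersHom _ b⁻¹) fun g => by
    refine MonoidHom.ext fun x => ?_
    show powA (ZMod.unitsMulAut q (u ^ toAdd g) x) = MulAut.conj (b⁻¹ ^ toAdd g) (powA x)
    rw [map_zpow, map_zpow]
    exact powA.apply_zpow_mulAut_apply (powA_unitsMulAut u hu) _ x

theorem ofSemidirect_comp_toSemidirect :
    (ofSemidirect u hu).comp (toSemidirect u hu) = MonoidHom.id (BSTorsion m q) := by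
  refine hom_ext ?_ ?_
  · simpa [toSemidirect_a, ofSemidirect] using powA_ofAdd_intCast (q := q) 1
  · simp [toSemidirect_b, ofSemidirect]

theorem toSemidirect_injective : Function.Injective (toSemidirect u hu) :=
  Function.LeftInverse.injective (g := ofSemidirect u hu)
    (DFunLike.congr_fun (ofSemidirect_comp_toSemidirect u hu))

theorem a_ne_one [Nontrivial (ZMod q)] (hm : IsUnit (m : ZMod q)) : (a : BSTorsion m q) ≠ 1 := by
  refine ne_of_apply_ne (toSemidirect hm.unit hm.unit_spec) ?_
  rw [toSemidirect_a, MonoidHom.map_one]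
  exact fun h =>
    one_ne_zero (ofAdd_eq_one.mp (inl_injective (h.trans (MonoidHom.map_one inl).symm)))

end BSTorsion

/-- Let `m` be coprime to the prime `p` and `s ≥ 1`. The group
`G_s(1,m) = ⟨a, b; b⁻¹ab = aᵐ, a^{pˢ} = 1⟩` is residually a finite `p`-group iff
`m ≡ 1 (mod p)`. -/
theorem bsTorsion_residually_p_iff (p : ℕ) (hp : p.Prime) (m : ℤ)
    (hm : IsCoprime m (p : ℤ)) (s : ℕ) (hs : 1 ≤ s) :
    ResiduallyPGroup p (BSTorsion m (p ^ s)) ↔ m ≡ 1 [ZMOD (p : ℤ)] := by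
  obtain ⟨n, rfl⟩ : ∃ n, s = n + 1 := ⟨s - 1, by omega⟩
  have : Fact (1 < p ^ (n + 1)) := ⟨Nat.one_lt_pow n.succ_ne_zero hp.one_lt⟩
  let u := ZMod.unitOfIsCoprime m (by exact_mod_cast hm.pow_right (n := n + 1))
  have hu : (u : ZMod (p ^ (n + 1))) = m := ZMod.coe_unitOfIsCoprime _ _
  constructor
  · intro h
    exact h.int_modEq_one_of_inv_mul_mul_eq_zpow hp (BSTorsion.a_ne_one (hu ▸ u.isUnit))
      BSTorsion.b_inv_mul_a_mul_b
  · intro h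
    have hu_pow : u ^ p ^ n = 1 := by
      ext
      rw [Units.val_pow_eq_pow_val, hu, ZMod.intCast_pow_pow_eq_one_of_modEq_one h, Units.val_one]
    have hcard : Nat.card (Multiplicative (ZMod (p ^ (n + 1)))) = p ^ (n + 1) :=
      (Nat.card_congr toAdd).trans (Nat.card_zmod _)
    refine (residuallyPGroup_semidirectProduct_int (n := n) hp hcard _ ?_).of_injective hp _
      (BSTorsion.toSemidirect_injective u hu)
    rw [MonoidHom.comp_apply, zpowersHom_apply, toAdd_ofAdd, zpow_natCast, hu_pow, map_one]
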